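/- arXiv:1812.08852 — 4 statements merged into one kernel-verified Lean document; each statement's English description precedes it below -/
import Mathlib

section
/- Suppose A ∈ R^{m×n} satisfies the sNSP of order s. Then any s-sparse solution x of A x = b with b ≠ 0 is a local minimizer of ‖·‖₁/‖·‖₂ on the affine feasible set {z : A z = b}: there exists t* > 0 such that for every v ∈ ker(A) with 0 < ‖v‖₂ ≤ t*, we have ‖x‖₁/‖x‖₂ ≤ ‖x+v‖₁/‖x+v‖₂. -/
open Finset

set_option maxHeartbeats 1000000 in
theorem stmt9 (m n s : ℕ) (A : Matrix (Fin m) (Fin n) ℝ)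
    (hsNSP : ∀ v : Fin n → ℝ, v ≠ 0 → A.mulVec v = 0 →
      ∀ S : Finset (Fin n), S.card ≤ s →
        ((s : ℝ) + 1) * (∑ i ∈ S, |v i|) ≤ ∑ i ∈ Sᶜ, |v i|)
    (x : Fin n → ℝ) (b : Fin m → ℝ)
    (hx : (Finset.univ.filter fun i => x i ≠ 0).card ≤ s)
    (hxb : A.mulVec x = b) (hb : b ≠ 0) :
    ∃ tstar : ℝ, 0 < tstar ∧
      ∀ v : Fin n → ℝ, A.mulVec v = 0 →
        0 < Real.sqrt (∑ i, (v i) ^ 2) →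
        Real.sqrt (∑ i, (v i) ^ 2) ≤ tstar →
        (∑ i, |x i|) / Real.sqrt (∑ i, (x i) ^ 2) ≤
          (∑ i, |x i + v i|) / Real.sqrt (∑ i, (x i + v i) ^ 2) := by
  classical
  set S : Finset (Fin n) := Finset.univ.filter (fun i => x i ≠ 0) with hSdef
  have hx0 : x ≠ 0 := by
    rintro rfl
    exact hb (by simpa [Matrix.mulVec_zero] using hxb.symm)
  obtain ⟨i0, hi0⟩ : ∃ i, x i ≠ 0 := Function.ne_iff.mp hx0
  have hi0S : i0 ∈ S := by simp [hSdef, hi0]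
  have hs1 : 1 ≤ s := le_trans (Finset.card_pos.mpr ⟨i0, hi0S⟩) hx
  have hs1R : (1:ℝ) ≤ (s:ℝ) := by exact_mod_cast hs1
  have hxoff : ∀ i ∈ Sᶜ, x i = 0 := by
    intro i hi
    have := Finset.mem_compl.mp hi
    simpa [hSdef] using this
  set X1 : ℝ := ∑ i, |x i| with hX1def
  set X2 : ℝ := ∑ i, (x i) ^ 2 with hX2def
  have hX1pos : 0 < X1 :=
    Finset.sum_pos' (fun i _ => abs_nonneg _) ⟨i0, Finset.mem_univ _, abs_pos.mpr hi0⟩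
  have hX2pos : 0 < X2 :=
    Finset.sum_pos' (fun i _ => sq_nonneg _) ⟨i0, Finset.mem_univ _, by positivity⟩
  set r : ℝ := Real.sqrt s with hrdef
  have hr1 : 1 ≤ r := by
    rw [hrdef, Real.le_sqrt' one_pos]
    simpa using hs1R
  have hrsq : r ^ 2 = (s : ℝ) := Real.sq_sqrt (by positivity)
  have hrs : r ≤ (s : ℝ) := by nlinarith
  -- Cauchy-Schwarz : X1^2 ≤ s * X2
  have hxX1 : X1 = ∑ i ∈ S, |x i| := by
    have h0 : ∑ i ∈ Sᶜ, |x i| = 0 :=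
      Finset.sum_eq_zero (fun i hi => by rw [hxoff i hi, abs_zero])
    have := Finset.sum_add_sum_compl S (fun i => |x i|)
    rw [hX1def, ← this, h0, add_zero]
  have hxX2 : X2 = ∑ i ∈ S, (x i) ^ 2 := by
    have h0 : ∑ i ∈ Sᶜ, (x i) ^ 2 = 0 :=
      Finset.sum_eq_zero (fun i hi => by rw [hxoff i hi]; ring)
    have := Finset.sum_add_sum_compl S (fun i => (x i) ^ 2)
    rw [hX2def, ← this, h0, add_zero]
  have hCS : X1 ^ 2 ≤ (s : ℝ) * X2 := by
    have h2 : (∑ i ∈ S, |x i|) ^ 2 ≤ (S.card : ℝ) * ∑ i ∈ S, |x i| ^ 2 := by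
      exact_mod_cast sq_sum_le_card_mul_sum_sq (s := S) (f := fun i => |x i|)
    have h3 : ∑ i ∈ S, |x i| ^ 2 = ∑ i ∈ S, (x i) ^ 2 :=
      Finset.sum_congr rfl (fun i _ => sq_abs _)
    have h4 : (S.card : ℝ) ≤ (s : ℝ) := by exact_mod_cast hx
    have h5 : (0:ℝ) ≤ ∑ i ∈ S, (x i) ^ 2 := Finset.sum_nonneg fun i _ => sq_nonneg _
    calc X1 ^ 2 = (∑ i ∈ S, |x i|) ^ 2 := by rw [hxX1]
      _ ≤ (S.card : ℝ) * ∑ i ∈ S, (x i) ^ 2 := by rw [← h3]; exact h2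
      _ ≤ (s : ℝ) * X2 := by rw [hxX2]; exact mul_le_mul_of_nonneg_right h4 h5
  -- pointwise bound |x i| * X1 ≤ r * X2
  have hkey : ∀ i, |x i| * X1 ≤ r * X2 := by
    intro i
    have h5 : |x i| ^ 2 ≤ X2 := by
      rw [hX2def, sq_abs]
      exact Finset.single_le_sum (fun j _ => sq_nonneg (x j)) (Finset.mem_univ i)
    have h6 : (|x i| * X1) ^ 2 ≤ (r * X2) ^ 2 := by
      have h7 := mul_le_mul h5 hCS (sq_nonneg X1) hX2pos.le
      calc (|x i| * X1) ^ 2 = |x i| ^ 2 * X1 ^ 2 := by ring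
        _ ≤ X2 * ((s:ℝ) * X2) := h7
        _ = (r * X2) ^ 2 := by rw [mul_pow, hrsq]; ring
    have h7 : 0 ≤ |x i| * X1 := mul_nonneg (abs_nonneg _) hX1pos.le
    have h8 : 0 ≤ r * X2 := mul_nonneg (by linarith) hX2pos.le
    nlinarith [h6, h7, h8]
  set κ : ℝ := ((s : ℝ) + 1 - r) / ((s : ℝ) + 2) with hκdef
  have hκmul : κ * ((s : ℝ) + 2) = (s : ℝ) + 1 - r := by
    rw [hκdef]; field_simp
  have hκpos : 0 < κ := div_pos (by linarith) (by positivity)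
  refine ⟨2 * κ * X2 / X1, by positivity, ?_⟩
  intro v hAv htpos htle
  set t : ℝ := Real.sqrt (∑ i, (v i) ^ 2) with htdef
  have ht0 : 0 ≤ t := Real.sqrt_nonneg _
  have hv0 : v ≠ 0 := by
    rintro rfl
    simp [htdef] at htpos
  have ht2 : t ^ 2 = ∑ i, (v i) ^ 2 := Real.sq_sqrt (Finset.sum_nonneg fun i _ => sq_nonneg _)
  have hNSP : ((s : ℝ) + 1) * (∑ i ∈ S, |v i|) ≤ ∑ i ∈ Sᶜ, |v i| := hsNSP v hv0 hAv S hx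
  set a : ℝ := ∑ i ∈ S, |v i| with hadef
  set Vb : ℝ := ∑ i ∈ Sᶜ, |v i| with hVbdef
  have hanonneg : 0 ≤ a := Finset.sum_nonneg fun i _ => abs_nonneg _
  have hVbnonneg : 0 ≤ Vb := Finset.sum_nonneg fun i _ => abs_nonneg _
  -- ℓ2 ≤ ℓ1 : t ≤ a + Vb
  have htl1 : t ≤ a + Vb := by
    have h1 : ∑ i, (v i) ^ 2 ≤ (∑ i, |v i|) ^ 2 := by
      calc ∑ i, (v i) ^ 2 = ∑ i, |v i| ^ 2 := by
            exact Finset.sum_congr rfl (fun i _ => (sq_abs _).symm)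
        _ ≤ (∑ i, |v i|) ^ 2 :=
            Finset.sum_sq_le_sq_sum_of_nonneg (fun i _ => abs_nonneg _)
    have h2 : ∑ i, |v i| = a + Vb := (Finset.sum_add_sum_compl S _).symm
    have h3 : t ≤ ∑ i, |v i| := by
      rw [htdef]
      calc Real.sqrt (∑ i, (v i) ^ 2) ≤ Real.sqrt ((∑ i, |v i|) ^ 2) :=
            Real.sqrt_le_sqrt h1
        _ = ∑ i, |v i| := Real.sqrt_sq (Finset.sum_nonneg fun i _ => abs_nonneg _)
    linarith
  have hVbt : ((s:ℝ) + 1) * t ≤ ((s:ℝ) + 2) * Vb := by nlinarith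
  -- key lower bound on Vb
  have hVb2 : r * a + κ * t ≤ Vb := by
    have hpos : (0:ℝ) < ((s:ℝ) + 1) * ((s:ℝ) + 2) := by positivity
    have k1 : ((s:ℝ) + 1 - r) * (((s:ℝ) + 1) * t) ≤ ((s:ℝ) + 1 - r) * (((s:ℝ) + 2) * Vb) :=
      mul_le_mul_of_nonneg_left hVbt (by linarith)
    have k2 : (((s:ℝ) + 2) * r) * (((s:ℝ) + 1) * a) ≤ (((s:ℝ) + 2) * r) * Vb :=
      mul_le_mul_of_nonneg_left hNSP (mul_nonneg (by linarith) (by linarith))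
    have hκt : ((s:ℝ) + 1) * (κ * ((s:ℝ) + 2)) * t = ((s:ℝ) + 1) * ((s:ℝ) + 1 - r) * t := by
      rw [hκmul]
    have k3 : (((s:ℝ) + 1) * ((s:ℝ) + 2)) * (r * a + κ * t) ≤
        (((s:ℝ) + 1) * ((s:ℝ) + 2)) * Vb := by linarith [k1, k2, hκt]
    exact le_of_mul_le_mul_left k3 hpos
  -- decomposition of |x+v|
  set e : Fin n → ℝ := fun i => |x i + v i| - |x i| with hedef
  have he_abs : ∀ i, |e i| ≤ |v i| := by
    intro i
    have := abs_abs_sub_abs_le_abs_sub (x i + v i) (x i)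
    simpa [hedef] using this
  set E : ℝ := ∑ i ∈ S, e i with hEdef
  set P : ℝ := ∑ i ∈ S, |x i| * e i with hPdef
  set Q : ℝ := (∑ i ∈ S, (e i) ^ 2) + ∑ i ∈ Sᶜ, (v i) ^ 2 with hQdef
  have hQt : Q ≤ t ^ 2 := by
    rw [hQdef, ht2]
    have h1 : ∑ i ∈ S, (e i) ^ 2 ≤ ∑ i ∈ S, (v i) ^ 2 := by
      apply Finset.sum_le_sum
      intro i _
      calc (e i) ^ 2 = |e i| ^ 2 := (sq_abs _).symm
        _ ≤ |v i| ^ 2 := by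
            apply pow_le_pow_left₀ (abs_nonneg _) (he_abs i)
        _ = (v i) ^ 2 := sq_abs _
    have h2 := Finset.sum_add_sum_compl S (fun i => (v i) ^ 2)
    linarith
  have hQ0 : 0 ≤ Q := by
    rw [hQdef]
    have := Finset.sum_nonneg (fun i (_ : i ∈ S) => sq_nonneg (e i))
    have := Finset.sum_nonneg (fun i (_ : i ∈ Sᶜ) => sq_nonneg (v i))
    linarith
  -- the first order bound
  have hD1 : -(r * X2) * a ≤ X2 * E - X1 * P := by
    have hid : X2 * E - X1 * P = ∑ i ∈ S, e i * (X2 - |x i| * X1) := by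
      rw [hEdef, hPdef, Finset.mul_sum, Finset.mul_sum, ← Finset.sum_sub_distrib]
      exact Finset.sum_congr rfl (fun i _ => by ring)
    rw [hid]
    have hlb : ∀ i ∈ S, -(|v i| * (r * X2)) ≤ e i * (X2 - |x i| * X1) := by
      intro i _
      have h1 : |e i * (X2 - |x i| * X1)| ≤ |v i| * (r * X2) := by
        rw [abs_mul]
        apply mul_le_mul (he_abs i) _ (abs_nonneg _) (abs_nonneg _)
        rw [abs_le]
        constructor
        · have := hkey i
          linarith
        · have h2 : (0:ℝ) ≤ |x i| * X1 := mul_nonneg (abs_nonneg _) hX1pos.le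
          nlinarith [hX2pos.le]
      linarith [neg_abs_le (e i * (X2 - |x i| * X1))]
    calc -(r * X2) * a = ∑ i ∈ S, -(|v i| * (r * X2)) := by
          rw [hadef, Finset.sum_neg_distrib, ← Finset.sum_mul]; ring
      _ ≤ ∑ i ∈ S, e i * (X2 - |x i| * X1) := Finset.sum_le_sum hlb
  set Y1 : ℝ := ∑ i, |x i + v i| with hY1def
  set Z2 : ℝ := ∑ i, (x i + v i) ^ 2 with hZ2def
  have hY1eq : Y1 = X1 + E + Vb := by
    have h1 : ∑ i ∈ S, |x i + v i| = (∑ i ∈ S, |x i|) + E := by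
      rw [hEdef, ← Finset.sum_add_distrib]
      exact Finset.sum_congr rfl (fun i _ => by rw [hedef]; ring)
    have h2 : ∑ i ∈ Sᶜ, |x i + v i| = Vb := by
      rw [hVbdef]
      exact Finset.sum_congr rfl (fun i hi => by rw [hxoff i hi, zero_add])
    have h3 := Finset.sum_add_sum_compl S (fun i => |x i + v i|)
    rw [hY1def, ← h3, h1, h2, ← hxX1]
  have hZ2eq : Z2 = X2 + 2 * P + Q := by
    have h1 : ∑ i ∈ S, (x i + v i) ^ 2
        = (∑ i ∈ S, (x i) ^ 2) + 2 * P + ∑ i ∈ S, (e i) ^ 2 := by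
      rw [hPdef, Finset.mul_sum, ← Finset.sum_add_distrib, ← Finset.sum_add_distrib]
      apply Finset.sum_congr rfl
      intro i _
      have h4 : (x i + v i) ^ 2 = (|x i| + e i) ^ 2 := by
        rw [hedef]
        have : |x i| + (|x i + v i| - |x i|) = |x i + v i| := by ring
        rw [this, sq_abs]
      rw [h4, add_sq, sq_abs]
      ring
    have h2 : ∑ i ∈ Sᶜ, (x i + v i) ^ 2 = ∑ i ∈ Sᶜ, (v i) ^ 2 :=
      Finset.sum_congr rfl (fun i hi => by rw [hxoff i hi, zero_add])
    have h3 := Finset.sum_add_sum_compl S (fun i => (x i + v i) ^ 2)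
    rw [hZ2def, ← h3, h1, h2, ← hxX2, hQdef]
    ring
  -- main inequality in squared form
  have htle' : X1 * t ≤ 2 * κ * X2 := by
    rw [le_div_iff₀ hX1pos] at htle
    linarith [htle]
  have hD : κ * X2 * t ≤ X2 * (E + Vb) - X1 * P := by
    have h1 : X2 * (r * a + κ * t) ≤ X2 * Vb := mul_le_mul_of_nonneg_left hVb2 hX2pos.le
    linarith [hD1, h1]
  have hG : X1 ^ 2 * Z2 ≤ Y1 ^ 2 * X2 := by
    rw [hY1eq, hZ2eq]
    linarith [mul_le_mul_of_nonneg_left hD (show (0:ℝ) ≤ 2 * X1 by linarith),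
      mul_le_mul_of_nonneg_left hQt (sq_nonneg X1),
      mul_nonneg (sq_nonneg (E + Vb)) hX2pos.le,
      mul_nonneg (mul_nonneg hX1pos.le ht0) (show (0:ℝ) ≤ 2 * κ * X2 - X1 * t by linarith)]
  -- x + v ≠ 0
  have hxv : ∃ i, x i + v i ≠ 0 := by
    by_contra h
    push_neg at h
    have hxveq : x + v = 0 := funext (fun i => by simpa using h i)
    have : b = 0 := by
      have h5 : A.mulVec (x + v) = b := by
        rw [Matrix.mulVec_add, hxb, hAv, add_zero]
      rw [hxveq, Matrix.mulVec_zero] at h5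
      exact h5.symm
    exact hb this
  obtain ⟨j, hj⟩ := hxv
  have hZ2pos : 0 < Z2 :=
    Finset.sum_pos' (fun i _ => sq_nonneg _) ⟨j, Finset.mem_univ _, by positivity⟩
  have hY1nonneg : 0 ≤ Y1 := Finset.sum_nonneg (fun i _ => abs_nonneg _)
  rw [div_le_div_iff₀ (Real.sqrt_pos.mpr hX2pos) (Real.sqrt_pos.mpr hZ2pos)]
  calc X1 * Real.sqrt Z2 = Real.sqrt (X1 ^ 2 * Z2) := by
        rw [Real.sqrt_mul (sq_nonneg _), Real.sqrt_sq hX1pos.le]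
    _ ≤ Real.sqrt (Y1 ^ 2 * X2) := Real.sqrt_le_sqrt hG
    _ = Y1 * Real.sqrt X2 := by
        rw [Real.sqrt_mul (sq_nonneg _), Real.sqrt_sq hY1nonneg]
end

section
/- Let c > 0, ρ > 0, and d ∈ R^n with d ≠ 0. Every minimizer y of the function G(y) = c/‖y‖₂ + (ρ/2)·‖y − d‖₂² over y ∈ R^n \ {0} has the form y = τ d, where τ > 0 is the unique real root of τ³ − τ² − D = 0 with D = c/(ρ‖d‖₂³). -/
/-!
The point `(‖y‖ / ‖d‖) • d` has the same norm as a minimizer `y`, so comparing the two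
gives `‖y - d‖ ≤ |‖y‖ - ‖d‖|`; this forces equality in Cauchy–Schwarz, hence `y = τ • d` with
`τ = ‖y‖ / ‖d‖ > 0`. On the ray `t ↦ t • d` the objective is
`c / (t ‖d‖) + ρ / 2 (t - 1)² ‖d‖²`, and its vanishing derivative at `τ` is the cubic equation.
-/

open Finset

section InnerProductSpace

variable {E : Type*} [NormedAddCommGroup E] [InnerProductSpace ℝ E]

noncomputable def proxObjective (c ρ : ℝ) (d z : E) : ℝ := c / ‖z‖ + ρ / 2 * ‖z - d‖ ^ 2

theorem smul_eq_smul_of_norm_sub_sq_le {y d : E} (h : ‖y - d‖ ^ 2 ≤ (‖y‖ - ‖d‖) ^ 2) :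
    ‖d‖ • y = ‖y‖ • d := by
  have hinner : inner ℝ y d = ‖y‖ * ‖d‖ := by
    nlinarith [norm_sub_sq_real y d, real_inner_le_norm y d]
  exact inner_eq_norm_mul_iff_real.mp hinner

theorem proxObjective_smul_of_pos (c ρ : ℝ) (d : E) {t : ℝ} (ht : 0 < t) :
    proxObjective c ρ d (t • d) = c / (t * ‖d‖) + ρ / 2 * ((t - 1) ^ 2 * ‖d‖ ^ 2) := by
  have hsub : t • d - d = (t - 1) • d := by rw [sub_smul, one_smul]
  rw [proxObjective, hsub, norm_smul, norm_smul, Real.norm_of_nonneg ht.le, mul_pow,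
    Real.norm_eq_abs, sq_abs]

theorem eq_smul_of_isMinOn_proxObjective {c ρ : ℝ} {d y : E} (hρ : 0 < ρ) (hd : d ≠ 0)
    (hmin : IsMinOn (proxObjective c ρ d) {0}ᶜ y) : y = (‖y‖ / ‖d‖) • d := by
  have hd' : 0 < ‖d‖ := norm_pos_iff.mpr hd
  rcases eq_or_ne y 0 with rfl | hy
  · simp
  set τ := ‖y‖ / ‖d‖
  have hτ : 0 < τ := div_pos (norm_pos_iff.mpr hy) hd'
  have hτd : τ * ‖d‖ = ‖y‖ := div_mul_cancel₀ _ hd'.ne'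
  have hcmp := isMinOn_iff.mp hmin (τ • d) (smul_ne_zero hτ.ne' hd)
  rw [proxObjective_smul_of_pos c ρ d hτ, hτd, proxObjective] at hcmp
  have hray : (τ - 1) ^ 2 * ‖d‖ ^ 2 = (‖y‖ - ‖d‖) ^ 2 := by rw [← hτd]; ring
  have hle : ‖y - d‖ ^ 2 ≤ (‖y‖ - ‖d‖) ^ 2 :=
    hray ▸ le_of_mul_le_mul_left (by linarith) (half_pos hρ)
  calc y = ‖d‖⁻¹ • (‖d‖ • y) := by rw [smul_smul, inv_mul_cancel₀ hd'.ne', one_smul]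
    _ = τ • d := by rw [smul_eq_smul_of_norm_sub_sq_le hle, smul_smul, inv_mul_eq_div]

theorem hasDerivAt_proxObjective_ray (c ρ : ℝ) {R t : ℝ} (hR : R ≠ 0) (ht : t ≠ 0) :
    HasDerivAt (fun t => c / (t * R) + ρ / 2 * ((t - 1) ^ 2 * R ^ 2))
      (-c / (t ^ 2 * R) + ρ * (t - 1) * R ^ 2) t := by
  have h := (hasDerivAt_const t c).div ((hasDerivAt_id t).mul_const R) (mul_ne_zero ht hR) |>.add
    ((((hasDerivAt_id t).sub_const 1).pow 2).mul_const (R ^ 2) |>.const_mul (ρ / 2))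
  refine h.congr_deriv ?_
  simp only [id]
  field_simp
  ring

theorem cubic_of_isMinOn_proxObjective {c ρ τ : ℝ} {d : E} (hρ : ρ ≠ 0) (hd : d ≠ 0)
    (hτ : 0 < τ) (hmin : IsMinOn (proxObjective c ρ d) {0}ᶜ (τ • d)) :
    τ ^ 3 - τ ^ 2 - c / (ρ * ‖d‖ ^ 3) = 0 := by
  have hd' : ‖d‖ ≠ 0 := norm_ne_zero_iff.mpr hd
  have hloc : IsLocalMin (fun t => c / (t * ‖d‖) + ρ / 2 * ((t - 1) ^ 2 * ‖d‖ ^ 2)) τ := by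
    filter_upwards [Ioi_mem_nhds hτ] with t ht
    rw [← proxObjective_smul_of_pos c ρ d hτ, ← proxObjective_smul_of_pos c ρ d ht]
    exact isMinOn_iff.mp hmin (t • d) (smul_ne_zero ht.ne' hd)
  have hcrit := hloc.hasDerivAt_eq_zero (hasDerivAt_proxObjective_ray c ρ hd' hτ.ne')
  field_simp at hcrit ⊢
  linear_combination hcrit

end InnerProductSpace

theorem proxObjective_toLp {ι : Type*} [Fintype ι] (c ρ : ℝ) (d z : ι → ℝ) :
    proxObjective c ρ (WithLp.toLp 2 d) (WithLp.toLp 2 z) =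
      c / Real.sqrt (∑ i, z i ^ 2) + ρ / 2 * ∑ i, (z i - d i) ^ 2 := by
  rw [proxObjective, ← WithLp.toLp_sub, EuclideanSpace.real_norm_sq_eq,
    EuclideanSpace.norm_eq]
  simp

theorem stmt12_general (n : ℕ) (c ρ : ℝ) (hρ : 0 < ρ)
    (d : Fin n → ℝ) (hd : d ≠ 0)
    (y : Fin n → ℝ) (hy : y ≠ 0)
    (hmin : ∀ z : Fin n → ℝ, z ≠ 0 →
      c / Real.sqrt (∑ i, (y i) ^ 2) + ρ / 2 * (∑ i, (y i - d i) ^ 2) ≤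
        c / Real.sqrt (∑ i, (z i) ^ 2) + ρ / 2 * (∑ i, (z i - d i) ^ 2)) :
    ∃ τ : ℝ, 0 < τ ∧ y = τ • d ∧
      τ ^ 3 - τ ^ 2 - c / (ρ * (Real.sqrt (∑ i, (d i) ^ 2)) ^ 3) = 0 := by
  set Y : EuclideanSpace ℝ (Fin n) := WithLp.toLp 2 y
  set D : EuclideanSpace ℝ (Fin n) := WithLp.toLp 2 d
  have hD : D ≠ 0 := by simpa [D] using hd
  have hY : Y ≠ 0 := by simpa [Y] using hy
  have hminY : IsMinOn (proxObjective c ρ D) {0}ᶜ Y := isMinOn_iff.mpr fun z hz => by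
    have := hmin z.ofLp (by simpa using hz)
    rwa [← proxObjective_toLp, ← proxObjective_toLp, WithLp.toLp_ofLp] at this
  have hYD := eq_smul_of_isMinOn_proxObjective hρ hD hminY
  have hτ : 0 < ‖Y‖ / ‖D‖ := div_pos (norm_pos_iff.mpr hY) (norm_pos_iff.mpr hD)
  refine ⟨‖Y‖ / ‖D‖, hτ, congrArg WithLp.ofLp hYD, ?_⟩
  have hnormD : ‖D‖ = Real.sqrt (∑ i, d i ^ 2) := by
    rw [EuclideanSpace.norm_eq]; simp [D]
  rw [← hnormD]
  exact cubic_of_isMinOn_proxObjective hρ.ne' hD hτ (hYD ▸ hminY)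

theorem stmt12 (n : ℕ) (c ρ : ℝ) (hc : 0 < c) (hρ : 0 < ρ)
    (d : Fin n → ℝ) (hd : d ≠ 0)
    (y : Fin n → ℝ) (hy : y ≠ 0)
    (hmin : ∀ z : Fin n → ℝ, z ≠ 0 →
      c / Real.sqrt (∑ i, (y i) ^ 2) + ρ / 2 * (∑ i, (y i - d i) ^ 2) ≤
        c / Real.sqrt (∑ i, (z i) ^ 2) + ρ / 2 * (∑ i, (z i - d i) ^ 2)) :
    ∃ τ : ℝ, 0 < τ ∧ y = τ • d ∧
      τ ^ 3 - τ ^ 2 - c / (ρ * (Real.sqrt (∑ i, (d i) ^ 2)) ^ 3) = 0 :=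
  stmt12_general n c ρ hρ d hd y hy hmin
end

section
/- Let μ > 0, d > 0, r ∈ R. The unique minimizer of f(z) = μ|z| + (1/2)(z − r)² over z ∈ [−d, d] equals sign(r)·min{max(|r| − μ, 0), d}. -/
/-!
The objective `f z = μ * |z| + (z - r) ^ 2 / 2` is `1`-strongly convex, so it suffices to check the
first-order (variational) inequality `μ * |z⋆| + (z⋆ - r) * z⋆ ≤ μ * |z| + (z⋆ - r) * z` on the box:
expanding the square then gives the quadratic growth `f z⋆ + (z - z⋆) ^ 2 / 2 ≤ f z`, which yields
both minimality and uniqueness. By the symmetry `(r, z) ↦ (-r, -z)` the variational inequality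
reduces to `r ≥ 0`, where `z⋆` is `r - μ` clamped to `[0, d]`.
-/

noncomputable def boxSoftThreshold (μ d r : ℝ) : ℝ :=
  Real.sign r * min (max (|r| - μ) 0) d

lemma boxSoftThreshold_mem_Icc (μ : ℝ) {d : ℝ} (hd : 0 ≤ d) (r : ℝ) :
    boxSoftThreshold μ d r ∈ Set.Icc (-d) d := by
  have hm₀ : 0 ≤ min (max (|r| - μ) 0) d := le_min (le_max_right _ _) hd
  have hm_le : min (max (|r| - μ) 0) d ≤ d := min_le_right _ _
  rw [Set.mem_Icc, ← abs_le, boxSoftThreshold, abs_mul]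
  calc |Real.sign r| * |min (max (|r| - μ) 0) d|
      ≤ 1 * d := by
        gcongr
        · rcases Real.sign_apply_eq r with h | h | h <;> simp [h]
        · rwa [abs_of_nonneg hm₀]
    _ = d := one_mul d

lemma clamp_variational_ineq {μ d r z : ℝ} (hμ : 0 ≤ μ) (hr : 0 ≤ r) (hz : |z| ≤ d) :
    μ * |min (max (r - μ) 0) d| + (min (max (r - μ) 0) d - r) * min (max (r - μ) 0) d ≤
      μ * |z| + (min (max (r - μ) 0) d - r) * z := by
  have hz_le : z ≤ |z| := le_abs_self z
  have hd : 0 ≤ d := (abs_nonneg z).trans hz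
  rcases le_total (r - μ) 0 with hrμ | hrμ
  · rw [max_eq_right hrμ, min_eq_left hd, abs_zero]
    nlinarith [abs_nonneg z]
  rw [max_eq_left hrμ]
  rcases le_total (r - μ) d with hrd | hrd
  · rw [min_eq_left hrd, abs_of_nonneg hrμ]
    nlinarith
  · rw [min_eq_right hrd, abs_of_nonneg hd]
    nlinarith

lemma boxSoftThreshold_variational_ineq {μ d r z : ℝ} (hμ : 0 ≤ μ) (hz : |z| ≤ d) :
    μ * |boxSoftThreshold μ d r| + (boxSoftThreshold μ d r - r) * boxSoftThreshold μ d r ≤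
      μ * |z| + (boxSoftThreshold μ d r - r) * z := by
  unfold boxSoftThreshold
  rcases lt_trichotomy r 0 with hr | rfl | hr
  · have h := clamp_variational_ineq (d := d) (z := -z) hμ (neg_nonneg.mpr hr.le)
      (by rwa [abs_neg])
    rw [abs_neg] at h
    rw [Real.sign_of_neg hr, abs_of_neg hr, neg_one_mul, abs_neg]
    linarith
  · simp [mul_nonneg hμ (abs_nonneg z)]
  · rw [Real.sign_of_pos hr, abs_of_pos hr, one_mul]
    exact clamp_variational_ineq hμ hr.le hz

lemma quadratic_growth_of_variational_ineq {μ r x z : ℝ}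
    (h : μ * |x| + (x - r) * x ≤ μ * |z| + (x - r) * z) :
    μ * |x| + (1 / 2) * (x - r) ^ 2 + (1 / 2) * (z - x) ^ 2 ≤ μ * |z| + (1 / 2) * (z - r) ^ 2 := by
  linear_combination h

lemma isUniqueMinOn_of_variational_ineq {μ r d x : ℝ} (hx : x ∈ Set.Icc (-d) d)
    (hvi : ∀ z ∈ Set.Icc (-d) d, μ * |x| + (x - r) * x ≤ μ * |z| + (x - r) * z) :
    x ∈ Set.Icc (-d) d ∧
    (∀ z ∈ Set.Icc (-d) d,
      μ * |x| + (1 / 2) * (x - r) ^ 2 ≤ μ * |z| + (1 / 2) * (z - r) ^ 2) ∧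
    (∀ z ∈ Set.Icc (-d) d,
      (∀ w ∈ Set.Icc (-d) d,
        μ * |z| + (1 / 2) * (z - r) ^ 2 ≤ μ * |w| + (1 / 2) * (w - r) ^ 2) →
      z = x) := by
  have growth := fun z hz => quadratic_growth_of_variational_ineq (hvi z hz)
  refine ⟨hx, fun z hz => ?_, fun z hz hmin => ?_⟩
  · nlinarith [growth z hz, sq_nonneg (z - x)]
  · have hsq : (z - x) ^ 2 ≤ 0 := by nlinarith [growth z hz, hmin x hx]
    exact sub_eq_zero.mp (sq_nonpos_iff _ |>.mp hsq)

theorem stmt16 (μ r d : ℝ) (hμ : 0 < μ) (hd : 0 < d) :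
    let zstar := Real.sign r * min (max (|r| - μ) 0) d
    zstar ∈ Set.Icc (-d) d ∧
    (∀ z ∈ Set.Icc (-d) d,
      μ * |zstar| + (1 / 2) * (zstar - r) ^ 2 ≤ μ * |z| + (1 / 2) * (z - r) ^ 2) ∧
    (∀ z ∈ Set.Icc (-d) d,
      (∀ w ∈ Set.Icc (-d) d,
        μ * |z| + (1 / 2) * (z - r) ^ 2 ≤ μ * |w| + (1 / 2) * (w - r) ^ 2) →
      z = zstar) := by
  intro zstar
  exact isUniqueMinOn_of_variational_ineq (boxSoftThreshold_mem_Icc μ hd.le r)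
    fun z hz => boxSoftThreshold_variational_ineq hμ.le (abs_le.mpr hz)
end

section
/- Let A ∈ R^{m×n} satisfy the sNSP of order s, let x be s-sparse with support S, A x = b, b ≠ 0, and let v ∈ ker(A) with ‖v‖₂ = 1. Then for t > 0, with σ_t(v) = ∑_{i∈S} v_i sign(x_i) + ‖v_{S̄}‖₁, one has σ_t(v)·‖x‖₂² − ⟨v_S, x⟩·‖x‖₁ ≥ 0. -/
open Finset

/-!
By the null space property, `σ ≥ -‖v_S‖₁ + (s + 1)‖v_S‖₁ = s‖v_S‖₁`. Since `x` is `s`-sparse,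
Cauchy–Schwarz gives `‖x‖₁² ≤ s‖x‖₂²`, hence
`σ‖x‖₂² ≥ s‖v_S‖₁‖x‖₂² ≥ ‖v_S‖₁‖x‖₁² ≥ |⟨v_S, x⟩|‖x‖₁`.
-/

lemma abs_mul_sign_le (a b : ℝ) : |a * Real.sign b| ≤ |a| := by
  rw [abs_mul]
  rcases Real.sign_apply_eq b with h | h | h <;> simp [h]

lemma neg_sum_abs_le_sum_mul_sign {ι : Type*} (S : Finset ι) (v x : ι → ℝ) :
    -∑ i ∈ S, |v i| ≤ ∑ i ∈ S, v i * Real.sign (x i) := by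
  rw [← sum_neg_distrib]
  exact sum_le_sum fun i _ => neg_le_of_abs_le (abs_mul_sign_le (v i) (x i))

lemma sq_sum_abs_le_card_support_mul_sum_sq {ι : Type*} [Fintype ι] (x : ι → ℝ) :
    (∑ i, |x i|) ^ 2 ≤ (univ.filter fun i => x i ≠ 0).card * ∑ i, x i ^ 2 := by
  set S := univ.filter fun i => x i ≠ 0
  have hsupp : ∑ i ∈ S, |x i| = ∑ i, |x i| :=
    sum_filter_of_ne fun i _ hi => abs_ne_zero.mp hi
  calc (∑ i, |x i|) ^ 2 = (∑ i ∈ S, |x i|) ^ 2 := by rw [hsupp]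
    _ ≤ S.card * ∑ i ∈ S, |x i| ^ 2 := sq_sum_le_card_mul_sum_sq
    _ ≤ S.card * ∑ i, x i ^ 2 := by
      simp only [sq_abs]
      exact mul_le_mul_of_nonneg_left
        (sum_le_sum_of_subset_of_nonneg (subset_univ S) fun i _ _ => sq_nonneg (x i)) (by positivity)

lemma abs_sum_mul_le_sum_abs_mul_sum_abs {ι : Type*} [Fintype ι] (S : Finset ι) (v x : ι → ℝ) :
    |∑ i ∈ S, v i * x i| ≤ (∑ i ∈ S, |v i|) * ∑ i, |x i| := by
  calc |∑ i ∈ S, v i * x i| ≤ ∑ i ∈ S, |v i| * |x i| := by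
        simpa only [abs_mul] using abs_sum_le_sum_abs (fun i => v i * x i) S
    _ ≤ ∑ i ∈ S, |v i| * ∑ j, |x j| := by
        gcongr with i
        exact single_le_sum (fun j _ => abs_nonneg (x j)) (mem_univ i)
    _ = (∑ i ∈ S, |v i|) * ∑ i, |x i| := (sum_mul ..).symm

theorem stmt18_general (m n s : ℕ) (A : Matrix (Fin m) (Fin n) ℝ)
    (hsNSP : ∀ v : Fin n → ℝ, v ≠ 0 → A.mulVec v = 0 →
      ∀ S : Finset (Fin n), S.card ≤ s →
        ((s : ℝ) + 1) * (∑ i ∈ S, |v i|) ≤ ∑ i ∈ Sᶜ, |v i|)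
    (x v : Fin n → ℝ)
    (hx : (Finset.univ.filter fun i => x i ≠ 0).card ≤ s)
    (hvker : A.mulVec v = 0) :
    let S := Finset.univ.filter fun i => x i ≠ 0
    let σ := (∑ i ∈ S, v i * Real.sign (x i)) + (∑ i ∈ Sᶜ, |v i|)
    0 ≤ σ * (∑ i, (x i) ^ 2) - (∑ i ∈ S, v i * x i) * (∑ i, |x i|) := by
  intro S σ
  obtain rfl | hv := eq_or_ne v 0
  · simp [σ]
  have hσ : s * ∑ i ∈ S, |v i| ≤ σ := by
    have hnsp := hsNSP v hv hvker S hx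
    have hsign := neg_sum_abs_le_sum_mul_sign S v x
    linarith
  have hL2 : (∑ i, |x i|) ^ 2 ≤ s * ∑ i, x i ^ 2 :=
    (sq_sum_abs_le_card_support_mul_sum_sq x).trans
      (mul_le_mul_of_nonneg_right (by exact_mod_cast hx) (by positivity))
  rw [sub_nonneg]
  calc (∑ i ∈ S, v i * x i) * ∑ i, |x i|
      ≤ ((∑ i ∈ S, |v i|) * ∑ i, |x i|) * ∑ i, |x i| := by
        gcongr
        exact (le_abs_self _).trans (abs_sum_mul_le_sum_abs_mul_sum_abs S v x)
    _ = (∑ i ∈ S, |v i|) * (∑ i, |x i|) ^ 2 := by ring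
    _ ≤ (∑ i ∈ S, |v i|) * (s * ∑ i, x i ^ 2) := by gcongr
    _ = (s * ∑ i ∈ S, |v i|) * ∑ i, x i ^ 2 := by ring
    _ ≤ σ * ∑ i, x i ^ 2 := by gcongr

theorem stmt18 (m n s : ℕ) (A : Matrix (Fin m) (Fin n) ℝ)
    (hsNSP : ∀ v : Fin n → ℝ, v ≠ 0 → A.mulVec v = 0 →
      ∀ S : Finset (Fin n), S.card ≤ s →
        ((s : ℝ) + 1) * (∑ i ∈ S, |v i|) ≤ ∑ i ∈ Sᶜ, |v i|)
    (x v : Fin n → ℝ) (b : Fin m → ℝ)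
    (hx : (Finset.univ.filter fun i => x i ≠ 0).card ≤ s)
    (hxb : A.mulVec x = b) (hb : b ≠ 0)
    (hvker : A.mulVec v = 0)
    (hv2 : Real.sqrt (∑ i, (v i) ^ 2) = 1)
    (t : ℝ) (ht : 0 < t) :
    let S := Finset.univ.filter fun i => x i ≠ 0
    let σ := (∑ i ∈ S, v i * Real.sign (x i)) + (∑ i ∈ Sᶜ, |v i|)
    0 ≤ σ * (∑ i, (x i) ^ 2) - (∑ i ∈ S, v i * x i) * (∑ i, |x i|) :=
  stmt18_general m n s A hsNSP x v hx hvker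
end
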